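/- Let m > 1 and r ∈ (1, m]. Let ψ : (0,∞) → ℝ be nonnegative and twice continuously differentiable with ∫₀^∞ (x+x^m)·(ψ(x)+|ψ''(x)|) dx < ∞, and suppose that ψ'(x) = −∫_x^∞ ψ''(y) dy and ψ(x) = ∫_x^∞ (y−x)ψ''(y) dy for every x > 0. Then −∫₀^∞ w_r(x)·ψ''(x) dx = −3(r−1)·∫₀¹ x·ψ(x) dx − r(r−1)·∫₁^∞ x^{r−2}·ψ(x) dx; in particular −∫₀^∞ w_r(x)·ψ''(x) dx ≥ −3r·M₁(ψ) − r²·∫₁^∞ x^{r−2}·ψ(x) dx. -/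

import Mathlib

open MeasureTheory Set Real
open scoped ENNReal

/-- The weight `w_r`: `w_r(x) = ((r−1)/2)x³` on `[0,1]` and
`w_r(x) = x^r + ((r−3)/2)x` for `x > 1`. -/
noncomputable def wgt (r x : ℝ) : ℝ :=
  if x ≤ 1 then ((r - 1) / 2) * x ^ 3 else x ^ r + ((r - 3) / 2) * x

set_option maxHeartbeats 1000000 in
/-- for `ψ ≥ 0` twice continuously differentiable on `(0,∞)` with
suitable integrability and decay,
`−∫₀^∞ w_r ψ'' = −3(r−1)∫₀¹ xψ − r(r−1)∫₁^∞ x^{r−2}ψ`, and in particular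
`−∫₀^∞ w_r ψ'' ≥ −3r M₁(ψ) − r² ∫₁^∞ x^{r−2}ψ`. -/
theorem diffusion_wr_identity (m r : ℝ) (ψ ψ' ψ'' : ℝ → ℝ)
    (hm : 1 < m) (hr1 : 1 < r) (hrm : r ≤ m)
    (hψ0 : ∀ x ∈ Ioi (0 : ℝ), 0 ≤ ψ x)
    (hd1 : ∀ x ∈ Ioi (0 : ℝ), HasDerivAt ψ (ψ' x) x)
    (hd2 : ∀ x ∈ Ioi (0 : ℝ), HasDerivAt ψ' (ψ'' x) x)
    (hcont : ContinuousOn ψ'' (Ioi 0))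
    (hint : IntegrableOn (fun x => (x + x ^ m) * (ψ x + |ψ'' x|)) (Ioi 0))
    (hrep1 : ∀ x ∈ Ioi (0 : ℝ), ψ' x = -∫ y in Ioi x, ψ'' y)
    (hrep2 : ∀ x ∈ Ioi (0 : ℝ), ψ x = ∫ y in Ioi x, (y - x) * ψ'' y) :
    (-∫ x in Ioi (0 : ℝ), wgt r x * ψ'' x) =
        -(3 * (r - 1)) * (∫ x in Ioo (0 : ℝ) 1, x * ψ x) -
          r * (r - 1) * (∫ x in Ioi (1 : ℝ), x ^ (r - 2) * ψ x) ∧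
      -(3 * r) * (∫ x in Ioi (0 : ℝ), x * ψ x) -
          r ^ 2 * (∫ x in Ioi (1 : ℝ), x ^ (r - 2) * ψ x) ≤
        -∫ x in Ioi (0 : ℝ), wgt r x * ψ'' x := by
  have hr0 : (0:ℝ) < r := lt_trans one_pos hr1
  have hr1' : (0:ℝ) < r - 1 := by linarith
  have hψcont : ContinuousOn ψ (Ioi 0) := fun x hx =>
    (hd1 x hx).continuousAt.continuousWithinAt
  have hψm : AEStronglyMeasurable ψ (volume.restrict (Ioi (0:ℝ))) :=
    hψcont.aestronglyMeasurable measurableSet_Ioi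
  have hψ''m : AEStronglyMeasurable ψ'' (volume.restrict (Ioi (0:ℝ))) :=
    hcont.aestronglyMeasurable measurableSet_Ioi
  have hwc : ContinuousOn (fun y : ℝ => y + y ^ m) (Ioi 0) :=
    continuousOn_id.add (continuousOn_id.rpow_const
      (fun x hx => Or.inl (ne_of_gt hx)))
  -- basic integrability
  have habs : IntegrableOn (fun y => (y + y ^ m) * |ψ'' y|) (Ioi 0) := by
    refine hint.mono' ((hwc.aestronglyMeasurable measurableSet_Ioi).mul hψ''m.norm) ?_
    rw [ae_restrict_iff' measurableSet_Ioi]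
    refine Filter.Eventually.of_forall fun y hy => ?_
    have hy0 : (0:ℝ) < y := hy
    have h1 : (0:ℝ) ≤ y + y ^ m := add_nonneg hy0.le (Real.rpow_nonneg hy0.le m)
    have h2 : (0:ℝ) ≤ ψ y := hψ0 y hy
    simp only [Real.norm_eq_abs, abs_mul, abs_abs, abs_of_nonneg h1]
    nlinarith [abs_nonneg (ψ'' y)]
  have hψb : IntegrableOn (fun y => (y + y ^ m) * ψ y) (Ioi 0) := by
    refine hint.mono' ((hwc.aestronglyMeasurable measurableSet_Ioi).mul hψm) ?_
    rw [ae_restrict_iff' measurableSet_Ioi]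
    refine Filter.Eventually.of_forall fun y hy => ?_
    have hy0 : (0:ℝ) < y := hy
    have h1 : (0:ℝ) ≤ y + y ^ m := add_nonneg hy0.le (Real.rpow_nonneg hy0.le m)
    have h2 : (0:ℝ) ≤ ψ y := hψ0 y hy
    simp only [Real.norm_eq_abs, abs_mul, abs_of_nonneg h1, abs_of_nonneg h2]
    nlinarith [abs_nonneg (ψ'' y)]
  have hxψ : IntegrableOn (fun y => y * ψ y) (Ioi 0) := by
    refine hψb.mono' ((continuousOn_id.aestronglyMeasurable measurableSet_Ioi).mul hψm) ?_
    rw [ae_restrict_iff' measurableSet_Ioi]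
    refine Filter.Eventually.of_forall fun y hy => ?_
    have h2 : (0:ℝ) ≤ ψ y := hψ0 y hy
    have h3 : (0:ℝ) ≤ y ^ m := Real.rpow_nonneg (le_of_lt hy) m
    simp only [Real.norm_eq_abs, abs_mul, abs_of_nonneg h2, abs_of_nonneg (le_of_lt (mem_Ioi.mp hy)), id]
    nlinarith
  have hJint : IntegrableOn (fun y => y ^ (r-2) * ψ y) (Ioi 1) := by
    refine (hψb.mono_set (Ioi_subset_Ioi zero_le_one)).mono'
      (((continuousOn_id.rpow_const (fun x hx => Or.inl (by
        have : (1:ℝ) < x := hx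
        positivity))).aestronglyMeasurable measurableSet_Ioi).mul
        (hψm.mono_measure (Measure.restrict_mono (Ioi_subset_Ioi zero_le_one) le_rfl))) ?_
    rw [ae_restrict_iff' measurableSet_Ioi]
    refine Filter.Eventually.of_forall fun y hy => ?_
    have hy1 : (1:ℝ) < y := hy
    have hy0 : (0:ℝ) < y := by linarith
    have h2 : (0:ℝ) ≤ ψ y := hψ0 y hy0
    have h3 : y ^ (r-2) ≤ y ^ m :=
      Real.rpow_le_rpow_of_exponent_le (le_of_lt hy1) (by linarith)
    have h4 : (0:ℝ) ≤ y ^ (r-2) := Real.rpow_nonneg (le_of_lt hy0) _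
    simp only [Real.norm_eq_abs, abs_mul, abs_of_nonneg h2, abs_of_nonneg h4]
    nlinarith

  -- the kernel for the region (0,1)
  set f₁ : ℝ → ℝ → ℝ := fun x y => (if x < y then x * (y - x) else 0) * ψ'' y with hf₁def
  have E1 : ∀ x ∈ Ioi (0:ℝ), (∫ y in Ioi (0:ℝ), f₁ x y) = x * ψ x := by
    intro x hx
    have hxeq : (fun y => f₁ x y) = (Ioi x).indicator (fun y => x * ((y - x) * ψ'' y)) := by
      funext y
      by_cases h : x < y <;> simp [hf₁def, Set.indicator_apply, mem_Ioi, h, mul_assoc]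
    rw [hxeq, setIntegral_indicator measurableSet_Ioi]
    have h2 : Ioi (0:ℝ) ∩ Ioi x = Ioi x := by
      rw [Ioi_inter_Ioi, sup_eq_right.mpr (le_of_lt hx)]
    rw [h2, MeasureTheory.integral_const_mul, ← hrep2 x hx]
  have E3 : ∀ y ∈ Ioi (0:ℝ), (∫ x in Ioo (0:ℝ) 1, f₁ x y)
      = (y * (min 1 y)^2/2 - (min 1 y)^3/3) * ψ'' y := by
    intro y hy
    have hy0 : (0:ℝ) < y := hy
    have hc0 : (0:ℝ) ≤ min 1 y := le_min zero_le_one hy0.le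
    have h1 : (fun x => f₁ x y)
        = fun x => ((Iio y).indicator (fun x => x * (y - x)) x) * ψ'' y := by
      funext x
      by_cases h : x < y <;> simp [hf₁def, Set.indicator_apply, mem_Iio, h]
    rw [h1, MeasureTheory.integral_mul_const]
    congr 1
    rw [setIntegral_indicator measurableSet_Iio]
    have h2 : Ioo (0:ℝ) 1 ∩ Iio y = Ioo 0 (min 1 y) := by
      ext z
      simp only [mem_inter_iff, mem_Ioo, mem_Iio, lt_min_iff]
      tauto
    rw [h2, ← integral_Ioc_eq_integral_Ioo, ← intervalIntegral.integral_of_le hc0]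
    have h3 : ∀ x : ℝ, x * (y - x) = y * x - x^2 := fun x => by ring
    simp_rw [h3]
    have i1 : IntervalIntegrable (fun x : ℝ => y * x) volume 0 (min 1 y) :=
      Continuous.intervalIntegrable (by continuity) _ _
    have i2 : IntervalIntegrable (fun x : ℝ => x ^ 2) volume 0 (min 1 y) :=
      Continuous.intervalIntegrable (by continuity) _ _
    rw [intervalIntegral.integral_sub i1 i2,
      intervalIntegral.integral_const_mul, integral_id, integral_pow]
    norm_num
    ring
  have hf1indeq : Function.uncurry f₁
      = {p : ℝ × ℝ | p.1 < p.2}.indicator (fun p => p.1 * (p.2 - p.1) * ψ'' p.2) := by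
    funext p
    by_cases h : p.1 < p.2 <;>
      simp [Function.uncurry, hf₁def, Set.indicator_apply, h]
  have hf1aesm : AEStronglyMeasurable (Function.uncurry f₁)
      ((volume.restrict (Ioo (0:ℝ) 1)).prod (volume.restrict (Ioi (0:ℝ)))) := by
    rw [hf1indeq, Measure.prod_restrict]
    refine AEStronglyMeasurable.indicator ?_ (measurableSet_lt measurable_fst measurable_snd)
    refine ContinuousOn.aestronglyMeasurable ?_ (measurableSet_Ioo.prod measurableSet_Ioi)
    exact ((continuous_fst.mul (continuous_snd.sub continuous_fst)).continuousOn).mul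
      (hcont.comp continuous_snd.continuousOn (fun p hp => hp.2))
  have hf1int : Integrable (Function.uncurry f₁)
      ((volume.restrict (Ioo (0:ℝ) 1)).prod (volume.restrict (Ioi (0:ℝ)))) := by
    refine Integrable.mono' (g := fun p : ℝ × ℝ => (1:ℝ) * ((p.2 + p.2 ^ m) * |ψ'' p.2|))
      (Integrable.mul_prod (integrableOn_const (C := (1:ℝ)) measure_Ioo_lt_top.ne) habs) hf1aesm ?_
    rw [Measure.prod_restrict, ae_restrict_iff' (measurableSet_Ioo.prod measurableSet_Ioi)]
    refine Filter.Eventually.of_forall fun p hp => ?_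
    obtain ⟨hp1, hp2⟩ := hp
    have hp2' : (0:ℝ) < p.2 := hp2
    have h3 : (0:ℝ) ≤ p.2 ^ m := Real.rpow_nonneg hp2'.le m
    simp only [one_mul]
    simp only [Function.uncurry, hf₁def, Real.norm_eq_abs, abs_mul]
    by_cases h : p.1 < p.2
    · rw [if_pos h, abs_of_nonneg (show (0:ℝ) ≤ p.1 * (p.2 - p.1) by nlinarith [hp1.1, hp1.2])]
      refine mul_le_mul_of_nonneg_right ?_ (abs_nonneg (ψ'' p.2))
      nlinarith [hp1.1, hp1.2, h3]
    · rw [if_neg h, abs_zero, zero_mul]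
      exact mul_nonneg (by linarith) (abs_nonneg _)
  have hswap1 : (∫ x in Ioo (0:ℝ) 1, ∫ y in Ioi (0:ℝ), f₁ x y)
      = ∫ y in Ioi (0:ℝ), ∫ x in Ioo (0:ℝ) 1, f₁ x y :=
    integral_integral_swap hf1int
  have h1 : (∫ x in Ioo (0:ℝ) 1, x * ψ x)
      = ∫ y in Ioi (0:ℝ), (y * (min 1 y)^2/2 - (min 1 y)^3/3) * ψ'' y := by
    calc (∫ x in Ioo (0:ℝ) 1, x * ψ x)
        = ∫ x in Ioo (0:ℝ) 1, ∫ y in Ioi (0:ℝ), f₁ x y :=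
          (setIntegral_congr_fun measurableSet_Ioo
            (fun x hx => (E1 x (lt_trans hx.1 hx.2 |> fun _ => hx.1)).symm))
      _ = ∫ y in Ioi (0:ℝ), ∫ x in Ioo (0:ℝ) 1, f₁ x y := hswap1
      _ = ∫ y in Ioi (0:ℝ), (y * (min 1 y)^2/2 - (min 1 y)^3/3) * ψ'' y :=
          setIntegral_congr_fun measurableSet_Ioi (fun y hy => E3 y hy)
  have hAint : Integrable (fun y => (y * (min 1 y)^2/2 - (min 1 y)^3/3) * ψ'' y)
      (volume.restrict (Ioi (0:ℝ))) := by
    refine (hf1int.integral_prod_right).congr ?_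
    rw [Filter.EventuallyEq, ae_restrict_iff' measurableSet_Ioi]
    exact Filter.Eventually.of_forall fun y hy => E3 y hy

  -- the kernel for the region (1,∞)
  set f₂ : ℝ → ℝ → ℝ := fun x y => (if x < y then x ^ (r-2) * (y - x) else 0) * ψ'' y
    with hf₂def
  have E2 : ∀ x ∈ Ioi (1:ℝ), (∫ y in Ioi (0:ℝ), f₂ x y) = x ^ (r-2) * ψ x := by
    intro x hx
    have hx1 : (1:ℝ) < x := hx
    have hx0 : (0:ℝ) < x := lt_trans one_pos hx1
    have hxeq : (fun y => f₂ x y)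
        = (Ioi x).indicator (fun y => x ^ (r-2) * ((y - x) * ψ'' y)) := by
      funext y
      by_cases h : x < y <;> simp [hf₂def, Set.indicator_apply, mem_Ioi, h, mul_assoc]
    rw [hxeq, setIntegral_indicator measurableSet_Ioi]
    have h2 : Ioi (0:ℝ) ∩ Ioi x = Ioi x := by
      rw [Ioi_inter_Ioi, sup_eq_right.mpr (le_of_lt hx0)]
    rw [h2, MeasureTheory.integral_const_mul, ← hrep2 x hx0]
  have hf2y : ∀ y : ℝ, Integrable (fun x => f₂ x y) (volume.restrict (Ioi (1:ℝ))) := by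
    intro y
    have heq : (fun x => f₂ x y)
        = (Iio y).indicator (fun x => x ^ (r-2) * (y - x) * ψ'' y) := by
      funext x
      by_cases h : x < y <;> simp [hf₂def, Set.indicator_apply, mem_Iio, h]
    rw [heq, integrable_indicator_iff measurableSet_Iio, IntegrableOn,
      Measure.restrict_restrict measurableSet_Iio]
    have h2 : Iio y ∩ Ioi (1:ℝ) = Ioo 1 y := by rw [inter_comm, Ioi_inter_Iio]
    rw [h2]
    by_cases hy : 1 < y
    · refine IntegrableOn.mono_set ?_ Ioo_subset_Icc_self
      apply ContinuousOn.integrableOn_Icc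
      refine ((ContinuousOn.rpow_const continuousOn_id ?_).mul
        ((continuous_const.sub continuous_id).continuousOn)).mul continuousOn_const
      intro x hx
      exact Or.inl (ne_of_gt (lt_of_lt_of_le one_pos hx.1))
    · rw [Set.Ioo_eq_empty hy]
      exact integrableOn_empty
  have E4 : ∀ y ∈ Ioi (0:ℝ), (∫ x in Ioi (1:ℝ), f₂ x y)
      = (if y ≤ 1 then 0 else (y ^ r - r * y + (r-1)) / (r * (r-1))) * ψ'' y := by
    intro y hy
    have hy0 : (0:ℝ) < y := hy
    have heq : (fun x => f₂ x y)
        = fun x => ((Iio y).indicator (fun x => x ^ (r-2) * (y - x)) x) * ψ'' y := by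
      funext x
      by_cases h : x < y <;> simp [hf₂def, Set.indicator_apply, mem_Iio, h]
    rw [heq, MeasureTheory.integral_mul_const]
    congr 1
    rw [setIntegral_indicator measurableSet_Iio, Ioi_inter_Iio]
    by_cases hy1 : y ≤ 1
    · rw [if_pos hy1, Set.Ioo_eq_empty (by intro hcon; linarith), setIntegral_empty]
    · push_neg at hy1
      rw [if_neg (not_le.mpr hy1)]
      rw [← integral_Ioc_eq_integral_Ioo, ← intervalIntegral.integral_of_le hy1.le]
      have hcong : ∀ x ∈ uIcc (1:ℝ) y, x ^ (r-2) * (y - x) = y * x ^ (r-2) - x ^ (r-1) := by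
        intro x hx
        rw [uIcc_of_le hy1.le] at hx
        have hx0 : (0:ℝ) < x := lt_of_lt_of_le one_pos hx.1
        have : x ^ (r-1) = x ^ (r-2) * x := by
          rw [← Real.rpow_add_one (ne_of_gt hx0) (r-2)]
          congr 1
          ring
        rw [this]
        ring
      rw [intervalIntegral.integral_congr hcong]
      have i1 : IntervalIntegrable (fun x : ℝ => y * x ^ (r-2)) volume 1 y :=
        (intervalIntegral.intervalIntegrable_rpow' (by linarith)).const_mul y
      have i2 : IntervalIntegrable (fun x : ℝ => x ^ (r-1)) volume 1 y :=
        intervalIntegral.intervalIntegrable_rpow' (by linarith)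
      rw [intervalIntegral.integral_sub i1 i2, intervalIntegral.integral_const_mul,
        integral_rpow (Or.inl (by linarith : (-1:ℝ) < r - 2)),
        integral_rpow (Or.inl (by linarith : (-1:ℝ) < r - 1))]
      have e1 : r - 2 + 1 = r - 1 := by ring
      have e2 : r - 1 + 1 = r := by ring
      rw [e1, e2, Real.one_rpow]
      have hyr : y ^ r = y * y ^ (r-1) := by
        have h := Real.rpow_add hy0 1 (r-1)
        rw [Real.rpow_one] at h
        have h12 : (1:ℝ) + (r-1) = r := by ring
        rw [h12] at h
        exact h
      rw [hyr]
      field_simp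
      simp only [Real.one_rpow]
      ring
  have hf2indeq : Function.uncurry f₂
      = {p : ℝ × ℝ | p.1 < p.2}.indicator (fun p => p.1 ^ (r-2) * (p.2 - p.1) * ψ'' p.2) := by
    funext p
    by_cases h : p.1 < p.2 <;>
      simp [Function.uncurry, hf₂def, Set.indicator_apply, h]
  have hf2aesm : AEStronglyMeasurable (Function.uncurry f₂)
      ((volume.restrict (Ioi (1:ℝ))).prod (volume.restrict (Ioi (0:ℝ)))) := by
    rw [hf2indeq, Measure.prod_restrict]
    refine AEStronglyMeasurable.indicator ?_ (measurableSet_lt measurable_fst measurable_snd)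
    refine ContinuousOn.aestronglyMeasurable ?_ (measurableSet_Ioi.prod measurableSet_Ioi)
    refine (ContinuousOn.mul (ContinuousOn.rpow_const continuous_fst.continuousOn ?_)
      (continuous_snd.sub continuous_fst).continuousOn).mul
      (hcont.comp continuous_snd.continuousOn (fun p hp => hp.2))
    intro p hp
    exact Or.inl (ne_of_gt (lt_trans one_pos hp.1))
  have hGbound : ∀ y ∈ Ioi (0:ℝ), (∫ x in Ioi (1:ℝ), ‖f₂ x y‖)
      ≤ (1/(r-1)) * ((y + y ^ m) * |ψ'' y|) := by
    intro y hy
    have hy0 : (0:ℝ) < y := hy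
    have hym0 : (0:ℝ) ≤ y ^ m := Real.rpow_nonneg hy0.le m
    by_cases hy1 : 1 < y
    · have hmono : (∫ x in Ioi (1:ℝ), ‖f₂ x y‖)
          ≤ ∫ x in Ioi (1:ℝ), (Ioc 1 y).indicator (fun x => x ^ (r-2) * (y * |ψ'' y|)) x := by
        have hIop : IntegrableOn (fun x : ℝ => x ^ (r-2) * (y * |ψ'' y|)) (Ioc 1 y) volume := by
          refine IntegrableOn.mono_set ?_ Ioc_subset_Icc_self
          apply ContinuousOn.integrableOn_Icc
          refine (ContinuousOn.rpow_const continuousOn_id ?_).mul continuousOn_const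
          intro x hx
          exact Or.inl (ne_of_gt (lt_of_lt_of_le one_pos hx.1))
        refine integral_mono_ae ((hf2y y).norm)
          ((hIop.integrable_indicator measurableSet_Ioc).restrict) ?_
        rw [Filter.EventuallyLE, ae_restrict_iff' measurableSet_Ioi]
        refine Filter.Eventually.of_forall fun x hx => ?_
        have hx1 : (1:ℝ) < x := hx
        have hx0 : (0:ℝ) < x := lt_trans one_pos hx1
        by_cases h : x < y
        · have hmem : x ∈ Ioc 1 y := ⟨hx1, h.le⟩
          rw [Set.indicator_of_mem hmem]
          have hk : (0:ℝ) ≤ x ^ (r-2) := Real.rpow_nonneg hx0.le _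
          simp only [hf₂def, if_pos h, Real.norm_eq_abs, abs_mul]
          rw [abs_of_nonneg hk, abs_of_nonneg (show (0:ℝ) ≤ y - x by linarith)]
          have h8 : x ^ (r-2) * (y - x) ≤ x ^ (r-2) * y := by nlinarith
          calc x ^ (r-2) * (y - x) * |ψ'' y| ≤ x ^ (r-2) * y * |ψ'' y| :=
                mul_le_mul_of_nonneg_right h8 (abs_nonneg _)
            _ = x ^ (r-2) * (y * |ψ'' y|) := by ring
        · simp only [hf₂def, if_neg h, Real.norm_eq_abs, zero_mul, abs_zero]
          exact Set.indicator_nonneg (fun x hx =>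
            mul_nonneg (Real.rpow_nonneg (le_of_lt (lt_trans one_pos hx.1)) _)
              (mul_nonneg hy0.le (abs_nonneg _))) x
      have hval : (∫ x in Ioi (1:ℝ), (Ioc 1 y).indicator (fun x => x ^ (r-2) * (y * |ψ'' y|)) x)
          = ((y ^ (r-1) - 1)/(r-1)) * (y * |ψ'' y|) := by
        rw [setIntegral_indicator measurableSet_Ioc,
          inter_eq_self_of_subset_right Ioc_subset_Ioi_self,
          MeasureTheory.integral_mul_const]
        congr 1
        rw [← intervalIntegral.integral_of_le hy1.le,
          integral_rpow (Or.inl (by linarith : (-1:ℝ) < r - 2))]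
        have e1 : r - 2 + 1 = r - 1 := by ring
        rw [e1, Real.one_rpow]
      refine le_trans hmono (le_trans (le_of_eq hval) ?_)
      have hyr : y ^ r = y * y ^ (r-1) := by
        have h := Real.rpow_add hy0 1 (r-1)
        rw [Real.rpow_one] at h
        have h12 : (1:ℝ) + (r-1) = r := by ring
        rw [h12] at h
        exact h
      have hym : y ^ r ≤ y ^ m := Real.rpow_le_rpow_of_exponent_le hy1.le hrm
      have h7 : y ^ r * |ψ'' y| = y * y ^ (r-1) * |ψ'' y| := by rw [← hyr]
      have h5 := mul_le_mul_of_nonneg_right hym (abs_nonneg (ψ'' y))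
      have h6 := mul_nonneg hy0.le (abs_nonneg (ψ'' y))
      have hkey : (y ^ (r-1) - 1) * (y * |ψ'' y|) ≤ (y + y ^ m) * |ψ'' y| := by
        nlinarith [h5, h6, h7]
      rw [div_mul_eq_mul_div, one_div, inv_mul_eq_div]
      gcongr
    · have hzero : ∀ x ∈ Ioi (1:ℝ), ‖f₂ x y‖ = 0 := by
        intro x hx
        have hx1 : (1:ℝ) < x := hx
        have : ¬ x < y := by push_neg at hy1 ⊢; linarith
        simp [hf₂def, if_neg this]
      rw [setIntegral_congr_fun measurableSet_Ioi hzero, integral_zero]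
      positivity
  have hGint : Integrable (fun y => ∫ x, ‖Function.uncurry f₂ (x, y)‖
      ∂(volume.restrict (Ioi (1:ℝ)))) (volume.restrict (Ioi (0:ℝ))) := by
    refine (habs.const_mul (1/(r-1))).mono' ?_ ?_
    · exact (hf2aesm.prod_swap.norm).integral_prod_right'
    · rw [ae_restrict_iff' measurableSet_Ioi]
      refine Filter.Eventually.of_forall fun y hy => ?_
      rw [Real.norm_eq_abs,
        abs_of_nonneg (integral_nonneg (fun x => norm_nonneg _))]
      exact hGbound y hy
  have hf2int : Integrable (Function.uncurry f₂)
      ((volume.restrict (Ioi (1:ℝ))).prod (volume.restrict (Ioi (0:ℝ)))) :=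
    (integrable_prod_iff' hf2aesm).2 ⟨Filter.Eventually.of_forall hf2y, hGint⟩
  have hswap2 : (∫ x in Ioi (1:ℝ), ∫ y in Ioi (0:ℝ), f₂ x y)
      = ∫ y in Ioi (0:ℝ), ∫ x in Ioi (1:ℝ), f₂ x y :=
    integral_integral_swap hf2int
  have h2 : (∫ x in Ioi (1:ℝ), x ^ (r-2) * ψ x)
      = ∫ y in Ioi (0:ℝ),
          (if y ≤ 1 then 0 else (y ^ r - r * y + (r-1)) / (r * (r-1))) * ψ'' y := by
    calc (∫ x in Ioi (1:ℝ), x ^ (r-2) * ψ x)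
        = ∫ x in Ioi (1:ℝ), ∫ y in Ioi (0:ℝ), f₂ x y :=
          setIntegral_congr_fun measurableSet_Ioi (fun x hx => (E2 x hx).symm)
      _ = ∫ y in Ioi (0:ℝ), ∫ x in Ioi (1:ℝ), f₂ x y := hswap2
      _ = _ := setIntegral_congr_fun measurableSet_Ioi (fun y hy => E4 y hy)
  have hBint : Integrable (fun y =>
      (if y ≤ 1 then 0 else (y ^ r - r * y + (r-1)) / (r * (r-1))) * ψ'' y)
      (volume.restrict (Ioi (0:ℝ))) := by
    refine (hf2int.integral_prod_right).congr ?_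
    rw [Filter.EventuallyEq, ae_restrict_iff' measurableSet_Ioi]
    exact Filter.Eventually.of_forall fun y hy => E4 y hy

  -- pointwise identity for the weight
  have E5 : ∀ y ∈ Ioi (0:ℝ), wgt r y * ψ'' y
      = 3*(r-1) * ((y * (min 1 y)^2/2 - (min 1 y)^3/3) * ψ'' y)
        + r*(r-1) * ((if y ≤ 1 then 0 else (y ^ r - r * y + (r-1)) / (r * (r-1))) * ψ'' y) := by
    intro y hy
    by_cases h : y ≤ 1
    · rw [wgt, if_pos h, if_pos h, min_eq_right h]
      ring
    · push_neg at h
      rw [wgt, if_neg (not_le.mpr h), if_neg (not_le.mpr h), min_eq_left h.le]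
      field_simp
      ring
  have key : (∫ x in Ioi (0:ℝ), wgt r x * ψ'' x)
      = 3*(r-1) * (∫ x in Ioo (0:ℝ) 1, x * ψ x)
        + r*(r-1) * (∫ x in Ioi (1:ℝ), x ^ (r-2) * ψ x) := by
    rw [setIntegral_congr_fun measurableSet_Ioi E5,
      integral_add (hAint.const_mul _) (hBint.const_mul _),
      MeasureTheory.integral_const_mul, MeasureTheory.integral_const_mul, h1, h2]
  -- positivity facts for the inequality
  have hI1pos : 0 ≤ ∫ x in Ioo (0:ℝ) 1, x * ψ x :=
    setIntegral_nonneg measurableSet_Ioo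
      (fun x hx => mul_nonneg (le_of_lt hx.1) (hψ0 x hx.1))
  have hJpos : 0 ≤ ∫ x in Ioi (1:ℝ), x ^ (r-2) * ψ x := by
    refine setIntegral_nonneg measurableSet_Ioi (fun x hx => ?_)
    have hx1 : (1:ℝ) < x := hx
    have hx0 : (0:ℝ) < x := lt_trans one_pos hx1
    exact mul_nonneg (Real.rpow_nonneg hx0.le _) (hψ0 x hx0)
  have hIle : (∫ x in Ioo (0:ℝ) 1, x * ψ x) ≤ ∫ x in Ioi (0:ℝ), x * ψ x := by
    refine setIntegral_mono_set hxψ ?_ (HasSubset.Subset.eventuallyLE Ioo_subset_Ioi_self)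
    rw [Filter.EventuallyLE, ae_restrict_iff' measurableSet_Ioi]
    exact Filter.Eventually.of_forall fun x hx =>
      mul_nonneg (le_of_lt hx) (hψ0 x hx)
  constructor
  · rw [key]
    ring
  · rw [key]
    nlinarith [mul_le_mul_of_nonneg_left hIle (show (0:ℝ) ≤ 3*(r-1) by linarith),
      hI1pos.trans hIle, hJpos, hI1pos,
      mul_nonneg (hI1pos.trans hIle) (show (0:ℝ) ≤ 3 by norm_num),
      mul_le_mul_of_nonneg_right (show r*(r-1) ≤ r^2 by nlinarith) hJpos]
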